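/- Consider a finite discounted MDP and inverse temperature τ ≥ 0. Suppose Q* : S → A → ℝ is a fixed point of the standard Bellman operator, i.e. T Q* = Q*. Then for every initial Q-function Q_0 and every (s,a), limsup_{k→∞} (T_soft^k Q_0)(s,a) ≤ Q*(s,a). -/
import Mathlib


/-- The softmax-weighted value `g_x(τ) = (∑ a, exp(τ·x_a)·x_a) / (∑ a, exp(τ·x_a))`
over a finite action type. -/
noncomputable def gval {A : Type*} [Fintype A] (x : A → ℝ) (τ : ℝ) : ℝ :=
  (∑ a, Real.exp (τ * x a) * x a) / (∑ a, Real.exp (τ * x a))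

/-- The softmax Bellman operator
`(T_soft Q)(s,a) = R(s,a) + γ·∑ s', P(s'|s,a)·g_{Q(s',·)}(τ)`. -/
noncomputable def Tsoft {S A : Type*} [Fintype S] [Fintype A]
    (P : S → A → S → ℝ) (R : S → A → ℝ) (γ τ : ℝ) (Q : S → A → ℝ) :
    S → A → ℝ :=
  fun s a => R s a + γ * ∑ s', P s a s' * gval (Q s') τ

/-- The standard Bellman operator
`(T Q)(s,a) = R(s,a) + γ·∑ s', P(s'|s,a)·max_{a'} Q(s',a')`. -/
noncomputable def Tstd {S A : Type*} [Fintype S] [Fintype A] [Nonempty A]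
    (P : S → A → S → ℝ) (R : S → A → ℝ) (γ : ℝ) (Q : S → A → ℝ) :
    S → A → ℝ :=
  fun s a => R s a + γ * ∑ s', P s a s' * Finset.univ.sup' Finset.univ_nonempty (Q s')


lemma gval_le_sup' {A : Type*} [Fintype A] [Nonempty A] (x : A → ℝ) (τ : ℝ) :
    gval x τ ≤ Finset.univ.sup' Finset.univ_nonempty x := by
  unfold gval
  have hd : 0 < ∑ a, Real.exp (τ * x a) :=
    Finset.sum_pos (fun a _ => Real.exp_pos _) Finset.univ_nonempty
  rw [div_le_iff₀ hd]
  calc ∑ a, Real.exp (τ * x a) * x a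
      ≤ ∑ a, Real.exp (τ * x a) * Finset.univ.sup' Finset.univ_nonempty x :=
        Finset.sum_le_sum (fun a _ => mul_le_mul_of_nonneg_left
          (Finset.le_sup' x (Finset.mem_univ a)) (Real.exp_pos _).le)
    _ = _ := by rw [← Finset.sum_mul, mul_comm]

lemma inf'_le_gval {A : Type*} [Fintype A] [Nonempty A] (x : A → ℝ) (τ : ℝ) :
    Finset.univ.inf' Finset.univ_nonempty x ≤ gval x τ := by
  unfold gval
  have hd : 0 < ∑ a, Real.exp (τ * x a) :=
    Finset.sum_pos (fun a _ => Real.exp_pos _) Finset.univ_nonempty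
  rw [le_div_iff₀ hd]
  calc Finset.univ.inf' Finset.univ_nonempty x * ∑ a, Real.exp (τ * x a)
      = ∑ a, Real.exp (τ * x a) * Finset.univ.inf' Finset.univ_nonempty x := by
        rw [← Finset.sum_mul, mul_comm]
    _ ≤ ∑ a, Real.exp (τ * x a) * x a :=
        Finset.sum_le_sum (fun a _ => mul_le_mul_of_nonneg_left
          (Finset.inf'_le x (Finset.mem_univ a)) (Real.exp_pos _).le)

/-- If `Q*` is a fixed point of the standard Bellman operator, then for every
initial `Q_0` and every `(s,a)`,
`limsup_{k→∞} (T_soft^k Q_0)(s,a) ≤ Q*(s,a)`. -/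
theorem limsup_tsoft_iterate_le_fixedPoint
    {S A : Type*} [Fintype S] [Fintype A] [Nonempty S] [Nonempty A]
    (P : S → A → S → ℝ) (R : S → A → ℝ) (γ τ : ℝ)
    (hγ : γ ∈ Set.Ioo (0 : ℝ) 1) (hτ : 0 ≤ τ)
    (hP : ∀ s a s', 0 ≤ P s a s') (hP1 : ∀ s a, ∑ s', P s a s' = 1)
    (Qstar : S → A → ℝ) (hQstar : Tstd P R γ Qstar = Qstar)
    (Q0 : S → A → ℝ) (s : S) (a : A) :
    Filter.limsup (fun k : ℕ => ((Tsoft P R γ τ)^[k] Q0) s a) Filter.atTop ≤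
      Qstar s a := by
  obtain ⟨hγ0, hγ1⟩ := hγ
  have hSA : (Finset.univ : Finset (S × A)).Nonempty := Finset.univ_nonempty
  set Qk : ℕ → S → A → ℝ := fun k => (Tsoft P R γ τ)^[k] Q0 with hQk
  set C : ℝ := (Finset.univ.sup' hSA (fun p : S × A => Q0 p.1 p.2 - Qstar p.1 p.2)) ⊔ 0
    with hCdef
  have hC0 : 0 ≤ C := le_max_right _ _
  have hC : ∀ s a, Q0 s a - Qstar s a ≤ C := fun s a =>
    le_trans (Finset.le_sup' (fun p : S × A => Q0 p.1 p.2 - Qstar p.1 p.2)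
      (Finset.mem_univ (s, a))) (le_max_left _ _)
  -- upper bound by induction
  have hub : ∀ k s a, Qk k s a ≤ Qstar s a + γ ^ k * C := by
    intro k
    induction k with
    | zero =>
      intro s a
      have := hC s a
      simp only [hQk, Function.iterate_zero, id_eq, pow_zero, one_mul]
      linarith
    | succ k ih =>
      intro s a
      have hstep : Qk (k + 1) = Tsoft P R γ τ (Qk k) := by
        simp only [hQk, Function.iterate_succ_apply']
      have hg : ∀ s', gval (Qk k s') τ ≤
          Finset.univ.sup' Finset.univ_nonempty (Qstar s') + γ ^ k * C := by
        intro s'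
        refine (gval_le_sup' _ _).trans ?_
        apply Finset.sup'_le
        intro a' _
        have h1 := ih s' a'
        have h2 : Qstar s' a' ≤ Finset.univ.sup' Finset.univ_nonempty (Qstar s') :=
          Finset.le_sup' (Qstar s') (Finset.mem_univ a')
        linarith
      have hsum : ∑ s', P s a s' * gval (Qk k s') τ ≤
          (∑ s', P s a s' * Finset.univ.sup' Finset.univ_nonempty (Qstar s')) + γ ^ k * C := by
        calc ∑ s', P s a s' * gval (Qk k s') τ
            ≤ ∑ s', P s a s' *
              (Finset.univ.sup' Finset.univ_nonempty (Qstar s') + γ ^ k * C) :=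
              Finset.sum_le_sum (fun s' _ =>
                mul_le_mul_of_nonneg_left (hg s') (hP s a s'))
          _ = (∑ s', P s a s' * Finset.univ.sup' Finset.univ_nonempty (Qstar s'))
              + γ ^ k * C := by
              simp only [mul_add, Finset.sum_add_distrib, ← Finset.sum_mul, hP1 s a, one_mul]
      have hfix : R s a + γ * ∑ s', P s a s' * Finset.univ.sup' Finset.univ_nonempty (Qstar s')
          = Qstar s a := by
        have := congrFun (congrFun hQstar s) a
        simpa [Tstd] using this
      calc Qk (k + 1) s a
          = R s a + γ * ∑ s', P s a s' * gval (Qk k s') τ := by rw [hstep]; rfl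
        _ ≤ R s a + γ * ((∑ s', P s a s' * Finset.univ.sup' Finset.univ_nonempty (Qstar s'))
              + γ ^ k * C) := by
            have := mul_le_mul_of_nonneg_left hsum hγ0.le
            linarith
        _ = Qstar s a + γ ^ (k + 1) * C := by rw [mul_add, ← add_assoc, hfix]; ring
  -- lower bound constant
  set B : ℝ := min (Finset.univ.inf' hSA (fun p : S × A => Q0 p.1 p.2))
      ((Finset.univ.inf' hSA (fun p : S × A => R p.1 p.2)) / (1 - γ)) with hBdef
  have hRmin : ∀ s a, Finset.univ.inf' hSA (fun p : S × A => R p.1 p.2) ≤ R s a :=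
    fun s a => Finset.inf'_le _ (Finset.mem_univ (s, a))
  have hB1γ : B * (1 - γ) ≤ Finset.univ.inf' hSA (fun p : S × A => R p.1 p.2) :=
    (le_div_iff₀ (by linarith)).mp (min_le_right _ _)
  have hlb : ∀ k s a, B ≤ Qk k s a := by
    intro k
    induction k with
    | zero =>
      intro s a
      have h1 : B ≤ Finset.univ.inf' hSA (fun p : S × A => Q0 p.1 p.2) := min_le_left _ _
      have h2 : Finset.univ.inf' hSA (fun p : S × A => Q0 p.1 p.2) ≤ Q0 s a :=
        Finset.inf'_le _ (Finset.mem_univ (s, a))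
      simp only [hQk, Function.iterate_zero, id_eq]
      linarith
    | succ k ih =>
      intro s a
      have hstep : Qk (k + 1) = Tsoft P R γ τ (Qk k) := by
        simp only [hQk, Function.iterate_succ_apply']
      have hg : ∀ s', B ≤ gval (Qk k s') τ := by
        intro s'
        refine le_trans ?_ (inf'_le_gval _ _)
        apply Finset.le_inf'
        intro a' _
        exact ih s' a'
      have hsum : B ≤ ∑ s', P s a s' * gval (Qk k s') τ := by
        calc B = ∑ s', P s a s' * B := by
              rw [← Finset.sum_mul, hP1 s a, one_mul]
          _ ≤ ∑ s', P s a s' * gval (Qk k s') τ :=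
              Finset.sum_le_sum (fun s' _ =>
                mul_le_mul_of_nonneg_left (hg s') (hP s a s'))
      have := hRmin s a
      rw [hstep]
      show B ≤ R s a + γ * ∑ s', P s a s' * gval (Qk k s') τ
      nlinarith [mul_le_mul_of_nonneg_left hsum hγ0.le]
  -- conclude with limsup
  have hpow : Filter.Tendsto (fun k : ℕ => γ ^ k) Filter.atTop (nhds 0) :=
    tendsto_pow_atTop_nhds_zero_of_lt_one hγ0.le hγ1
  have htend : Filter.Tendsto (fun k : ℕ => Qstar s a + γ ^ k * C) Filter.atTop
      (nhds (Qstar s a)) := by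
    have := (hpow.mul_const C).const_add (Qstar s a)
    simpa using this
  have hcob : Filter.IsCoboundedUnder (· ≤ ·) Filter.atTop
      (fun k : ℕ => Qk k s a) :=
    Filter.isCoboundedUnder_le_of_eventually_le Filter.atTop
      (Filter.Eventually.of_forall (fun k => hlb k s a))
  calc Filter.limsup (fun k : ℕ => ((Tsoft P R γ τ)^[k] Q0) s a) Filter.atTop
      ≤ Filter.limsup (fun k : ℕ => Qstar s a + γ ^ k * C) Filter.atTop :=
        Filter.limsup_le_limsup
          (Filter.Eventually.of_forall (fun k => hub k s a)) hcob
          htend.isBoundedUnder_le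
    _ = Qstar s a := htend.limsup_eq
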